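/- arXiv:2605.04876 — 6 statements merged into one kernel-verified Lean document; each statement's English description precedes it below -/
import Mathlib

section
/- Let k ≥ 1 be odd and let G be a graph. If G has a perfect k-matching, then for every subset S of V(G), odd(G−S) + k·i(G−S) ≤ k|S|, where i(G−S) is the number of isolated vertices of G−S and odd(G−S) is the number of odd components of G−S having at least three vertices. -/
open Finset

namespace SpectralKMatching

/-- The join of two simple graphs on the disjoint sum of their vertex types:
all edges within each part as given, plus all edges between the two parts. -/
def join {α β : Type*} (G : SimpleGraph α) (H : SimpleGraph β) : SimpleGraph (α ⊕ β) where
  Adj x y :=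
    match x, y with
    | Sum.inl a, Sum.inl a' => G.Adj a a'
    | Sum.inr b, Sum.inr b' => H.Adj b b'
    | Sum.inl _, Sum.inr _ => True
    | Sum.inr _, Sum.inl _ => True
  symm := ⟨by rintro (a | b) (a' | b') h <;> simp_all <;> exact h.symm⟩
  loopless := ⟨by rintro (a | b) h <;> simp_all⟩

/-- The number of isolated vertices of a graph. -/
noncomputable def isoCount {V : Type*} (G : SimpleGraph V) : ℕ :=
  Nat.card {v : V // ∀ u, ¬ G.Adj v u}

/-- The number of connected components of odd order having at least three vertices. -/
noncomputable def oddCount {V : Type*} (G : SimpleGraph V) : ℕ :=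
  Nat.card {c : G.ConnectedComponent // Odd (Nat.card c.supp) ∧ 3 ≤ Nat.card c.supp}

open scoped Classical in
/-- `f` is a perfect `k`-matching of `G`. -/
noncomputable def IsPerfectKMatching {V : Type*} [Fintype V] (G : SimpleGraph V) (k : ℕ)
    (f : Sym2 V → ℕ) : Prop :=
  (∀ e, f e ≠ 0 → e ∈ G.edgeSet) ∧ (∀ e, f e ≤ k) ∧
    ∀ v : V, ∑ u : V, (if G.Adj v u then f s(v, u) else 0) = k

open scoped Classical in
/-- `f` is a fractional perfect matching of `G`. -/
noncomputable def IsFractionalPerfectMatching {V : Type*} [Fintype V] (G : SimpleGraph V)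
    (f : Sym2 V → ℝ) : Prop :=
  (∀ e, f e ≠ 0 → e ∈ G.edgeSet) ∧ (∀ e, 0 ≤ f e ∧ f e ≤ 1) ∧
    ∀ v : V, ∑ u : V, (if G.Adj v u then f s(v, u) else 0) = 1

open scoped Classical in
/-- The adjacency spectral radius of a finite graph: the largest real eigenvalue
(root of the characteristic polynomial) of its adjacency matrix. -/
noncomputable def specRad {V : Type*} [Fintype V] [DecidableEq V] (G : SimpleGraph V) : ℝ :=
  sSup {x : ℝ | ((G.adjMatrix ℝ).charpoly).IsRoot x}

/-- `G` is `t`-connected. -/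
def IsTConnected {V : Type*} [Fintype V] (t : ℕ) (G : SimpleGraph V) : Prop :=
  t < Fintype.card V ∧ ∀ S : Finset V, S.card < t → (G.induce ((↑S : Set V)ᶜ)).Connected

/-- The graph `K_t ∨ (K_{n-2t-1} ∪ (t+1)K_1)`. -/
def model₁ (t n : ℕ) : SimpleGraph (Fin t ⊕ (Fin (n - 2*t - 1) ⊕ Fin (t+1))) :=
  join (SimpleGraph.completeGraph (Fin t))
    ((SimpleGraph.completeGraph (Fin (n - 2*t - 1))) ⊕g (⊥ : SimpleGraph (Fin (t+1))))

/-- The graph `K_t ∨ (K_{n-2t-3} ∪ K_3 ∪ tK_1)`. -/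
def model₂ (t n : ℕ) : SimpleGraph (Fin t ⊕ ((Fin (n - 2*t - 3) ⊕ Fin 3) ⊕ Fin t)) :=
  join (SimpleGraph.completeGraph (Fin t))
    (((SimpleGraph.completeGraph (Fin (n - 2*t - 3))) ⊕g (SimpleGraph.completeGraph (Fin 3)))
      ⊕g (⊥ : SimpleGraph (Fin t)))


private lemma even_double_sum {ι : Type*} [DecidableEq ι] (A : Finset ι) (m : ι → ι → ℕ)
    (hsymm : ∀ u w, m u w = m w u) (hdiag : ∀ u, m u u = 0) :
    Even (∑ u ∈ A, ∑ w ∈ A, m u w) := by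
  induction A using Finset.induction_on with
  | empty => simp
  | insert a A ha ih =>
    rw [Finset.sum_insert ha, Finset.sum_insert ha,
      Finset.sum_congr rfl (fun u (_ : u ∈ A) => Finset.sum_insert ha),
      Finset.sum_add_distrib, hdiag a]
    have h2 : ∑ u ∈ A, m u a = ∑ w ∈ A, m a w :=
      Finset.sum_congr rfl (fun u _ => hsymm u a)
    obtain ⟨e, he⟩ := ih
    exact ⟨(∑ w ∈ A, m a w) + e, by rw [h2]; omega⟩

private lemma reach_iso {W : Type*} {H : SimpleGraph W} {u w : W}
    (hiso : ∀ x, ¬ H.Adj u x) (h : H.Reachable u w) : w = u := by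
  obtain ⟨p⟩ := h
  cases p with
  | nil => rfl
  | cons h' _ => exact absurd h' (hiso _)

theorem stmt0 {V : Type*} [Fintype V] {G : SimpleGraph V} {k : ℕ} (hk : 1 ≤ k) (hkodd : Odd k)
    (f : Sym2 V → ℕ) (hf : IsPerfectKMatching G k f) (S : Finset V) :
    oddCount (G.induce ((↑S : Set V)ᶜ)) + k * isoCount (G.induce ((↑S : Set V)ᶜ)) ≤ k * S.card := by
  classical
  obtain ⟨hfe, hfk, hdeg⟩ := hf
  set W : Set V := ((↑S : Set V)ᶜ) with hW
  set H : SimpleGraph W := G.induce W with hH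
  set t : V → V → ℕ := fun v u => if G.Adj v u then f s(v, u) else 0 with ht
  have tsymm : ∀ v u, t v u = t u v := by
    intro v u; simp only [ht]; rw [G.adj_comm, Sym2.eq_swap]
  have tdiag : ∀ v, t v v = 0 := fun v => by simp [ht]
  have hdeg' : ∀ v, ∑ u : V, t v u = k := by
    intro v
    rw [← hdeg v]
  set Sc : Finset V := Sᶜ with hSc
  have hmemW : ∀ x, x ∈ Sc ↔ x ∈ W := by intro x; simp [hW, hSc]
  set cS : V → ℕ := fun v => ∑ x ∈ S, t v x with hcS
  -- adjacency in H
  have hHadj : ∀ u w : W, H.Adj u w ↔ G.Adj u.val w.val := by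
    intro u w; simp [hH]
  -- fibers
  set fib : H.ConnectedComponent → Finset W :=
    fun c => Finset.univ.filter (fun u => H.connectedComponentMk u = c) with hfib
  have hmemfib : ∀ (c) (u : W), u ∈ fib c ↔ H.connectedComponentMk u = c := by
    intro c u; simp [hfib]
  have hcard : ∀ c : H.ConnectedComponent, Nat.card c.supp = (fib c).card := by
    intro c
    rw [Nat.card_eq_fintype_card]
    rw [show (Fintype.card c.supp) = Fintype.card {u : W // H.connectedComponentMk u = c} from
      Fintype.card_congr (Equiv.subtypeEquivRight (fun u => c.mem_supp_iff u))]
    exact Fintype.card_subtype _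
  set iso : W → Prop := fun u => ∀ w, ¬ H.Adj u w with hiso_def
  -- cross weight of isolated vertex is k
  have iso_cS : ∀ u : W, iso u → cS u.val = k := by
    intro u hu
    have h0 : ∑ x ∈ Sc, t u.val x = 0 := by
      apply Finset.sum_eq_zero
      intro x hx
      simp only [ht]
      rw [if_neg]
      intro hadj
      exact hu ⟨x, (hmemW x).mp hx⟩ ((hHadj u ⟨x, (hmemW x).mp hx⟩).mpr hadj)
    have := Finset.sum_add_sum_compl S (t u.val)
    rw [hdeg' u.val] at this
    rw [← hSc] at this
    rw [h0, add_zero] at this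
    exact this
  -- fiber of isolated vertex is a singleton
  have iso_fib : ∀ u : W, iso u → fib (H.connectedComponentMk u) = {u} := by
    intro u hu
    apply Finset.eq_singleton_iff_unique_mem.mpr
    constructor
    · exact (hmemfib _ u).mpr rfl
    · intro w hw
      exact reach_iso hu (SimpleGraph.ConnectedComponent.eq.mp ((hmemfib _ w).mp hw)).symm
  -- crossing sum restricted to the component
  have cross_eq : ∀ (c) (u : W), u ∈ fib c →
      ∑ x ∈ Sc, t u.val x = ∑ w ∈ fib c, t u.val w.val := by
    intro c u hu
    rw [Finset.sum_subtype Sc hmemW (fun x => t u.val x)]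
    apply (Finset.sum_subset (Finset.subset_univ _) ?_).symm
    intro w _ hw
    simp only [ht]
    rw [if_neg]
    intro hadj
    apply hw
    rw [hmemfib]
    exact (SimpleGraph.ConnectedComponent.sound ((hHadj u w).mpr hadj).symm.reachable).trans
      ((hmemfib c u).mp hu)
  have comp_split : ∀ c, ∑ u ∈ fib c, cS u.val + ∑ u ∈ fib c, ∑ w ∈ fib c, t u.val w.val
      = k * (fib c).card := by
    intro c
    have hpt : ∀ u ∈ fib c, cS u.val + ∑ w ∈ fib c, t u.val w.val = k := by
      intro u hu
      rw [← cross_eq c u hu, hcS]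
      have := Finset.sum_add_sum_compl S (t u.val)
      rw [hdeg' u.val, ← hSc] at this
      exact this
    rw [← Finset.sum_add_distrib, Finset.sum_congr rfl hpt, Finset.sum_const, smul_eq_mul,
      mul_comm]
  -- per-component lower bound
  have key : ∀ c : H.ConnectedComponent,
      (if Odd (fib c).card ∧ 3 ≤ (fib c).card then 1 else 0)
        + k * (Finset.univ.filter (fun u => iso u ∧ H.connectedComponentMk u = c)).card
      ≤ ∑ u ∈ fib c, cS u.val := by
    intro c
    by_cases hex : ∃ u, iso u ∧ H.connectedComponentMk u = c
    · obtain ⟨u, hu, hc⟩ := hex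
      have hfibc : fib c = {u} := hc ▸ iso_fib u hu
      have hfil : (Finset.univ.filter (fun u => iso u ∧ H.connectedComponentMk u = c)) = {u} := by
        apply Finset.eq_singleton_iff_unique_mem.mpr
        refine ⟨Finset.mem_filter.mpr ⟨Finset.mem_univ u, hu, hc⟩, ?_⟩
        intro w hw
        simp only [Finset.mem_filter, Finset.mem_univ, true_and] at hw
        have : w ∈ fib c := (hmemfib c w).mpr hw.2
        rw [hfibc] at this
        simpa using this
      rw [hfibc, hfil]
      have hcSu := iso_cS u hu
      have hcond : ¬ (Odd ({u} : Finset W).card ∧ 3 ≤ ({u} : Finset W).card) := by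
        simp
      rw [if_neg hcond]
      simp [hcSu]
    · push_neg at hex
      have hfil0 : (Finset.univ.filter (fun u => iso u ∧ H.connectedComponentMk u = c)) = ∅ := by
        apply Finset.filter_eq_empty_iff.mpr
        intro u _
        rintro ⟨h1, h2⟩
        exact hex u h1 h2
      rw [hfil0]
      simp only [Finset.card_empty, mul_zero, add_zero]
      split_ifs with hcond
      · have h1 : Odd (k * (fib c).card) := hkodd.mul hcond.1
        rw [← comp_split c] at h1
        have h2 : Even (∑ u ∈ fib c, ∑ w ∈ fib c, t u.val w.val) :=
          even_double_sum (fib c) (fun u w => t u.val w.val)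
            (fun u w => tsymm u.val w.val) (fun u => tdiag u.val)
        rw [Nat.odd_add] at h1
        exact (h1.mpr h2).pos
      · exact Nat.zero_le _
  -- counting oddCount
  have hodds : oddCount H = (Finset.univ.filter
      (fun c : H.ConnectedComponent => Odd (fib c).card ∧ 3 ≤ (fib c).card)).card := by
    unfold oddCount
    simp_rw [hcard]
    rw [Nat.card_eq_fintype_card]
    exact Fintype.card_subtype _
  have hisos : isoCount H = (Finset.univ.filter iso).card := by
    unfold isoCount
    rw [Nat.card_eq_fintype_card]
    exact Fintype.card_subtype _
  have hisosplit : (Finset.univ.filter iso).card = ∑ c : H.ConnectedComponent,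
      (Finset.univ.filter (fun u => iso u ∧ H.connectedComponentMk u = c)).card := by
    rw [Finset.card_eq_sum_card_fiberwise
      (f := fun u : W => H.connectedComponentMk u) (t := Finset.univ) (fun u _ => mem_univ _)]
    apply Finset.sum_congr rfl
    intro c _
    congr 1
    rw [Finset.filter_filter]
  -- top bound
  have top : ∑ x ∈ Sc, cS x ≤ k * S.card := by
    have e1 : ∑ x ∈ Sc, cS x = ∑ s' ∈ S, ∑ x ∈ Sc, t s' x := by
      rw [Finset.sum_comm]
      exact Finset.sum_congr rfl fun x _ => Finset.sum_congr rfl fun s' _ => (tsymm x s').symm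
    rw [e1]
    calc ∑ s' ∈ S, ∑ x ∈ Sc, t s' x ≤ ∑ s' ∈ S, ∑ x : V, t s' x :=
          Finset.sum_le_sum fun s' _ =>
            Finset.sum_le_sum_of_subset (Finset.subset_univ _)
      _ = k * S.card := by
          rw [Finset.sum_congr rfl (fun s' _ => hdeg' s'), Finset.sum_const, smul_eq_mul,
            mul_comm]
  -- assemble
  have main : oddCount H + k * isoCount H ≤ ∑ x ∈ Sc, cS x := by
    rw [hodds, hisos, hisosplit, Finset.mul_sum, Finset.card_filter,
      ← Finset.sum_add_distrib]
    calc ∑ c : H.ConnectedComponent, ((if Odd (fib c).card ∧ 3 ≤ (fib c).card then 1 else 0)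
          + k * (Finset.univ.filter (fun u => iso u ∧ H.connectedComponentMk u = c)).card)
        ≤ ∑ c : H.ConnectedComponent, ∑ u ∈ fib c, cS u.val := Finset.sum_le_sum fun c _ => key c
      _ = ∑ u : W, cS u.val := by
          rw [hfib]; exact Finset.sum_fiberwise _ _ _
      _ = ∑ x ∈ Sc, cS x := (Finset.sum_subtype Sc hmemW cS).symm
  exact main.trans top

end SpectralKMatching
end

section
/- Let t, k, n be positive integers with k odd, n even, and n ≥ 2t+2. Then the graph K_t ∨ (K_{n−2t−1} ∪ (t+1)K_1) has no perfect k-matching. -/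
open Finset

namespace SpectralKMatching

theorem stmt1 (t k n : ℕ) (ht : 1 ≤ t) (hk : 1 ≤ k) (hkodd : Odd k) (hn : Even n)
    (hge : 2*t + 2 ≤ n) :
    ¬ ∃ f, IsPerfectKMatching (model₁ t n) k f := by
  classical
  rintro ⟨f, hedge, hle, hdeg⟩
  -- each isolated vertex contributes k via edges to the left part
  have hR : ∀ j : Fin (t+1),
      (∑ a : Fin t, f s((Sum.inr (Sum.inr j) : Fin t ⊕ (Fin (n - 2*t - 1) ⊕ Fin (t+1))), Sum.inl a)) = k := by
    intro j
    have h := hdeg (Sum.inr (Sum.inr j))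
    rw [Fintype.sum_sum_type, Fintype.sum_sum_type] at h
    simpa [model₁, join, SimpleGraph.completeGraph] using h
  have hL : ∀ a : Fin t,
      (∑ j : Fin (t+1), f s((Sum.inl a : Fin t ⊕ (Fin (n - 2*t - 1) ⊕ Fin (t+1))), Sum.inr (Sum.inr j))) ≤ k := by
    intro a
    have h := hdeg (Sum.inl a)
    rw [Fintype.sum_sum_type, Fintype.sum_sum_type] at h
    have h3 : (∑ j : Fin (t+1), if (model₁ t n).Adj (Sum.inl a) (Sum.inr (Sum.inr j))
        then f s(Sum.inl a, Sum.inr (Sum.inr j)) else 0) ≤ k := by omega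
    simpa [model₁, join] using h3
  have key : (t+1) * k ≤ t * k := by
    calc (t+1) * k = ∑ j : Fin (t+1), ∑ a : Fin t,
          f s((Sum.inr (Sum.inr j) : Fin t ⊕ (Fin (n - 2*t - 1) ⊕ Fin (t+1))), Sum.inl a) := by
            rw [Finset.sum_congr rfl fun j _ => hR j]; simp [mul_comm]
      _ = ∑ a : Fin t, ∑ j : Fin (t+1),
          f s((Sum.inl a : Fin t ⊕ (Fin (n - 2*t - 1) ⊕ Fin (t+1))), Sum.inr (Sum.inr j)) := by
            rw [Finset.sum_comm]
            exact Finset.sum_congr rfl fun a _ => Finset.sum_congr rfl fun j _ => by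
              rw [Sym2.eq_swap]
      _ ≤ ∑ a : Fin t, k := Finset.sum_le_sum fun a _ => hL a
      _ = t * k := by simp [mul_comm]
  have : t + 1 ≤ t := Nat.le_of_mul_le_mul_right key hk
  omega

end SpectralKMatching
end

section
/- Let t, k, n be positive integers with k odd, n even, and n ≥ 2t+6. Then the graph K_t ∨ (K_{n−2t−3} ∪ K_3 ∪ tK_1) has no perfect k-matching. -/
open Finset

namespace SpectralKMatching

open scoped Classical in
noncomputable def wt {V : Type*} (G : SimpleGraph V) (f : Sym2 V → ℕ) (x y : V) : ℕ :=
  if G.Adj x y then f s(x, y) else 0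

lemma wt_symm {V : Type*} (G : SimpleGraph V) (f : Sym2 V → ℕ) (x y : V) :
    wt G f x y = wt G f y x := by
  classical
  unfold wt
  by_cases h : G.Adj x y
  · rw [if_pos h, if_pos h.symm, Sym2.eq_swap]
  · rw [if_neg h, if_neg (fun h' => h h'.symm)]

lemma wt_of_not_adj {V : Type*} {G : SimpleGraph V} (f : Sym2 V → ℕ) {x y : V}
    (h : ¬ G.Adj x y) : wt G f x y = 0 := by
  classical
  unfold wt
  rw [if_neg h]

theorem stmt2 (t k n : ℕ) (ht : 1 ≤ t) (hk : 1 ≤ k) (hkodd : Odd k) (hn : Even n)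
    (hge : 2*t + 6 ≤ n) :
    ¬ ∃ f, IsPerfectKMatching (model₂ t n) k f := by
  classical
  rintro ⟨f, h1, h2, h3⟩
  set G := model₂ t n with hG
  set g : (Fin t ⊕ ((Fin (n - 2*t - 3) ⊕ Fin 3) ⊕ Fin t)) →
      (Fin t ⊕ ((Fin (n - 2*t - 3) ⊕ Fin 3) ⊕ Fin t)) → ℕ := wt G f with hg
  have h3' : ∀ v, ∑ u, g v u = k := by
    intro v
    have := h3 v
    rw [← this]
    apply Finset.sum_congr rfl
    intro u _
    simp only [hg, wt]
  have gsymm : ∀ x y, g x y = g y x := by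
    intro x y; rw [hg]; exact wt_symm G f x y
  have gzero : ∀ {x y}, ¬ G.Adj x y → g x y = 0 := by
    intro x y h; rw [hg]; exact wt_of_not_adj f h
  -- vertex names
  set L : Fin t → (Fin t ⊕ ((Fin (n - 2*t - 3) ⊕ Fin 3) ⊕ Fin t)) := Sum.inl with hL
  set B : Fin (n - 2*t - 3) → (Fin t ⊕ ((Fin (n - 2*t - 3) ⊕ Fin 3) ⊕ Fin t)) :=
    fun j => Sum.inr (Sum.inl (Sum.inl j)) with hB
  set T : Fin 3 → (Fin t ⊕ ((Fin (n - 2*t - 3) ⊕ Fin 3) ⊕ Fin t)) :=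
    fun i => Sum.inr (Sum.inl (Sum.inr i)) with hT
  set I : Fin t → (Fin t ⊕ ((Fin (n - 2*t - 3) ⊕ Fin 3) ⊕ Fin t)) :=
    fun j => Sum.inr (Sum.inr j) with hI
  have hL' : ∀ a : Fin t,
      (Sum.inl a : Fin t ⊕ ((Fin (n - 2*t - 3) ⊕ Fin 3) ⊕ Fin t)) = L a := fun _ => rfl
  have hB' : ∀ b : Fin (n - 2*t - 3),
      (Sum.inr (Sum.inl (Sum.inl b)) : Fin t ⊕ ((Fin (n - 2*t - 3) ⊕ Fin 3) ⊕ Fin t)) = B b :=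
    fun _ => rfl
  have hT' : ∀ i : Fin 3,
      (Sum.inr (Sum.inl (Sum.inr i)) : Fin t ⊕ ((Fin (n - 2*t - 3) ⊕ Fin 3) ⊕ Fin t)) = T i :=
    fun _ => rfl
  have hI' : ∀ j : Fin t,
      (Sum.inr (Sum.inr j) : Fin t ⊕ ((Fin (n - 2*t - 3) ⊕ Fin 3) ⊕ Fin t)) = I j :=
    fun _ => rfl
  -- adjacency facts
  have hadjIB : ∀ j b, ¬ G.Adj (I j) (Sum.inr b) := by
    rintro j (b | b)
    · cases b <;> simp [hG, model₂, join, hI]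
    · simp [hG, model₂, join, hI]
  have hadjTB : ∀ i (b : Fin (n - 2*t - 3)), ¬ G.Adj (T i) (B b) := by
    intro i b; simp [hG, model₂, join, hT, hB]
  have hadjTI : ∀ i j, ¬ G.Adj (T i) (I j) := by
    intro i j; simp [hG, model₂, join, hT, hI]
  -- Step 1: isolated vertices send k to the left
  have hiso : ∀ j : Fin t, ∑ a : Fin t, g (I j) (L a) = k := by
    intro j
    have h := h3' (I j)
    rw [Fintype.sum_sum_type] at h
    simp only [hL'] at h
    have hz : ∑ b : (Fin (n - 2*t - 3) ⊕ Fin 3) ⊕ Fin t, g (I j) (Sum.inr b) = 0 :=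
      Finset.sum_eq_zero fun b _ => gzero (hadjIB j b)
    omega
  -- Step 2: the triangle sends an odd amount to the left
  have htri : ∀ i : Fin 3,
      (∑ a : Fin t, g (T i) (L a)) + (∑ i' : Fin 3, g (T i) (T i')) = k := by
    intro i
    have h := h3' (T i)
    rw [Fintype.sum_sum_type, Fintype.sum_sum_type, Fintype.sum_sum_type] at h
    simp only [hL', hB', hT', hI'] at h
    have hz1 : ∑ b : Fin (n - 2*t - 3), g (T i) (B b) = 0 :=
      Finset.sum_eq_zero fun b _ => gzero (hadjTB i b)
    have hz2 : ∑ j : Fin t, g (T i) (I j) = 0 :=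
      Finset.sum_eq_zero fun j _ => gzero (hadjTI i j)
    omega
  have hD : ∑ i : Fin 3, ∑ i' : Fin 3, g (T i) (T i')
      = 2 * (g (T 0) (T 1) + g (T 0) (T 2) + g (T 1) (T 2)) := by
    have d0 : ∀ i : Fin 3, g (T i) (T i) = 0 :=
      fun i => gzero (G.loopless.irrefl (T i))
    rw [Fin.sum_univ_three]
    rw [Fin.sum_univ_three, Fin.sum_univ_three, Fin.sum_univ_three]
    rw [d0 0, d0 1, d0 2, gsymm (T 1) (T 0), gsymm (T 2) (T 0), gsymm (T 2) (T 1)]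
    ring
  have hF : Odd (∑ i : Fin 3, ∑ a : Fin t, g (T i) (L a)) := by
    have hsum : (∑ i : Fin 3, ∑ a : Fin t, g (T i) (L a))
        + ∑ i : Fin 3, ∑ i' : Fin 3, g (T i) (T i') = 3 * k := by
      rw [← Finset.sum_add_distrib]
      rw [Finset.sum_congr rfl fun i _ => htri i]
      simp [Fin.sum_univ_three]
    obtain ⟨m, hm⟩ := hkodd
    refine ⟨3*m + 1 - (g (T 0) (T 1) + g (T 0) (T 2) + g (T 1) (T 2)), ?_⟩
    omega
  -- Step 3: sum over left vertices
  have hleft : ∑ a : Fin t, ∑ u, g (L a) u = t * k := by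
    rw [Finset.sum_congr rfl fun a _ => h3' (L a)]
    simp [Finset.sum_const, mul_comm]
  rw [Finset.sum_comm] at hleft
  rw [Fintype.sum_sum_type] at hleft
  simp only [hL', hB', hT', hI'] at hleft
  -- the right part, summed over the right index first
  have hright : (∑ b : (Fin (n - 2*t - 3) ⊕ Fin 3) ⊕ Fin t, ∑ a : Fin t, g (L a) (Sum.inr b))
      = (∑ b : Fin (n - 2*t - 3), ∑ a : Fin t, g (B b) (L a))
      + (∑ i : Fin 3, ∑ a : Fin t, g (T i) (L a))
      + t * k := by
    rw [Fintype.sum_sum_type, Fintype.sum_sum_type]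
    simp only [hB', hT', hI']
    have hI2 : ∑ j : Fin t, ∑ a : Fin t, g (L a) (I j) = t * k := by
      rw [Finset.sum_congr rfl fun j _ =>
        (Finset.sum_congr rfl fun a _ => gsymm (L a) (I j)).trans (hiso j)]
      simp [Finset.sum_const, mul_comm]
    have e1 : ∑ b : Fin (n - 2*t - 3), ∑ a : Fin t, g (L a) (B b)
        = ∑ b : Fin (n - 2*t - 3), ∑ a : Fin t, g (B b) (L a) :=
      Finset.sum_congr rfl fun b _ => Finset.sum_congr rfl fun a _ => gsymm (L a) (B b)
    have e2 : ∑ i : Fin 3, ∑ a : Fin t, g (L a) (T i)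
        = ∑ i : Fin 3, ∑ a : Fin t, g (T i) (L a) :=
      Finset.sum_congr rfl fun i _ => Finset.sum_congr rfl fun a _ => gsymm (L a) (T i)
    rw [e1, e2, hI2]
  rw [hright] at hleft
  have hFpos : 1 ≤ ∑ i : Fin 3, ∑ a : Fin t, g (T i) (L a) := by
    obtain ⟨m, hm⟩ := hF; omega
  omega


end SpectralKMatching
end

section
/- A graph G has a fractional perfect matching if and only if i(G−S) ≤ |S| for every subset S ⊆ V(G), where i(G−S) denotes the number of isolated vertices of G−S. -/
open Finset

namespace SpectralKMatching

section Aux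
open scoped Classical

private lemma isoCount_induce_eq {V : Type*} [Fintype V] (G : SimpleGraph V) (S : Finset V) :
    Nat.card {v : ↥((↑S : Set V)ᶜ) // ∀ u, ¬ (G.induce ((↑S : Set V)ᶜ)).Adj v u} =
      (univ.filter (fun v => v ∉ S ∧ ∀ u, G.Adj v u → u ∈ S)).card := by
  classical
  have e : {v : ↥((↑S : Set V)ᶜ) // ∀ u, ¬ (G.induce ((↑S : Set V)ᶜ)).Adj v u} ≃
      {v : V // v ∉ S ∧ ∀ u, G.Adj v u → u ∈ S} :=
    { toFun := fun p => ⟨p.1.1, by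
        refine ⟨p.1.2, fun u hu => ?_⟩
        by_contra husn
        exact p.2 ⟨u, husn⟩ hu,
      ⟩
      invFun := fun q => ⟨⟨q.1, q.2.1⟩, by
        rintro ⟨u, hu⟩ hadj
        exact hu (q.2.2 u hadj)⟩
      left_inv := by rintro ⟨⟨v, hv⟩, h⟩; rfl
      right_inv := by rintro ⟨v, h⟩; rfl }
  rw [Nat.card_congr e, Nat.card_eq_fintype_card, Fintype.card_subtype]


private lemma forward {V : Type*} [Fintype V] (G : SimpleGraph V) (f : Sym2 V → ℝ)
    (hsupp : ∀ e, f e ≠ 0 → e ∈ G.edgeSet) (hb : ∀ e, 0 ≤ f e ∧ f e ≤ 1)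
    (hdeg : ∀ v : V, ∑ u : V, (if G.Adj v u then f s(v, u) else 0) = 1)
    (S : Finset V) :
    (univ.filter (fun v => v ∉ S ∧ ∀ u, G.Adj v u → u ∈ S)).card ≤ S.card := by
  classical
  set I := univ.filter (fun v => v ∉ S ∧ ∀ u, G.Adj v u → u ∈ S) with hI
  have key : (I.card : ℝ) ≤ (S.card : ℝ) := by
    have h1 : (I.card : ℝ) = ∑ v ∈ I, ∑ u ∈ S, (if G.Adj v u then f s(v, u) else 0) := by
      rw [Finset.card_eq_sum_ones, Nat.cast_sum]
      refine Finset.sum_congr rfl fun v hv => ?_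
      have hv' := (Finset.mem_filter.mp hv).2
      have : ∑ u ∈ S, (if G.Adj v u then f s(v, u) else 0)
          = ∑ u : V, (if G.Adj v u then f s(v, u) else 0) := by
        refine Finset.sum_subset (Finset.subset_univ S) fun u _ hu => ?_
        rw [if_neg (fun hadj => hu (hv'.2 u hadj))]
      rw [this, hdeg v]; norm_num
    rw [h1, Finset.sum_comm]
    have h2 : ∀ u ∈ S, ∑ v ∈ I, (if G.Adj v u then f s(v, u) else 0) ≤ 1 := by
      intro u _
      calc ∑ v ∈ I, (if G.Adj v u then f s(v, u) else 0)
          ≤ ∑ v : V, (if G.Adj v u then f s(v, u) else 0) := by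
            refine Finset.sum_le_sum_of_subset_of_nonneg (Finset.subset_univ I) fun v _ _ => ?_
            split
            · exact (hb _).1
            · exact le_rfl
        _ = ∑ v : V, (if G.Adj u v then f s(u, v) else 0) := by
            refine Finset.sum_congr rfl fun v _ => ?_
            rw [SimpleGraph.adj_comm, Sym2.eq_swap]
        _ = 1 := hdeg u
    calc ∑ u ∈ S, ∑ v ∈ I, (if G.Adj v u then f s(v, u) else 0)
        ≤ ∑ u ∈ S, (1 : ℝ) := Finset.sum_le_sum h2
      _ = S.card := by simp
  exact_mod_cast key


private lemma hall {V : Type*} [Fintype V] (G : SimpleGraph V)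
    (h : ∀ S : Finset V, (univ.filter (fun v => v ∉ S ∧ ∀ u, G.Adj v u → u ∈ S)).card ≤ S.card)
    (A : Finset V) :
    A.card ≤ (A.biUnion (fun a => univ.filter (G.Adj a))).card := by
  classical
  set nbr : V → Finset V := fun a => univ.filter (G.Adj a) with hnbr
  have mem_nbr : ∀ a b, b ∈ nbr a ↔ G.Adj a b := by
    intro a b; simp [hnbr]
  set N := A.biUnion nbr with hN
  have mem_N : ∀ b, b ∈ N ↔ ∃ a ∈ A, G.Adj a b := by
    intro b; simp [hN, mem_nbr]
  set I := A.filter (fun a => a ∉ N) with hIdef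
  set NI := I.biUnion nbr with hNI
  have mem_NI : ∀ b, b ∈ NI ↔ ∃ a ∈ I, G.Adj a b := by
    intro b; simp [hNI, mem_nbr]
  have hIN : ∀ a ∈ I, a ∉ N := fun a ha => (Finset.mem_filter.mp ha).2
  have hIA : I ⊆ A := Finset.filter_subset _ _
  have hNIN : NI ⊆ N := Finset.biUnion_subset_biUnion_of_subset_left _ hIA
  -- I ⊆ isolated vertices of G - NI
  have hIiso : I ⊆ univ.filter (fun v => v ∉ NI ∧ ∀ u, G.Adj v u → u ∈ NI) := by
    intro v hv
    refine Finset.mem_filter.mpr ⟨Finset.mem_univ _, ?_, ?_⟩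
    · intro hvNI
      obtain ⟨a, haI, hadj⟩ := (mem_NI v).mp hvNI
      exact hIN v hv ((mem_N v).mpr ⟨a, hIA haI, hadj⟩)
    · intro u hadj
      exact (mem_NI u).mpr ⟨v, hv, hadj⟩
  have hI_le : I.card ≤ NI.card := le_trans (Finset.card_le_card hIiso) (h NI)
  -- A ∩ N part
  set C := A.filter (fun a => a ∈ N) with hC
  have hcard : A.card = I.card + C.card := by
    have := Finset.card_filter_add_card_filter_not (s := A) (p := fun a => a ∈ N)
    simp only [hIdef, hC]
    omega
  -- C and NI disjoint, both subsets of N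
  have hdisj : Disjoint C NI := by
    rw [Finset.disjoint_left]
    intro c hcC hcNI
    obtain ⟨i, hiI, hadj⟩ := (mem_NI c).mp hcNI
    exact hIN i hiI ((mem_N i).mpr ⟨c, Finset.mem_of_mem_filter _ hcC, hadj.symm⟩)
  have hsub : C ∪ NI ⊆ N := by
    refine Finset.union_subset ?_ hNIN
    intro c hc; exact (Finset.mem_filter.mp hc).2
  have : C.card + NI.card ≤ N.card := by
    rw [← Finset.card_union_of_disjoint hdisj]
    exact Finset.card_le_card hsub
  omega


private lemma construct {V : Type*} [Fintype V] (G : SimpleGraph V) (g : V → V)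
    (hginj : Function.Injective g) (hgadj : ∀ v, G.Adj v (g v)) :
    ∃ f : Sym2 V → ℝ, (∀ e, f e ≠ 0 → e ∈ G.edgeSet) ∧ (∀ e, 0 ≤ f e ∧ f e ≤ 1) ∧
      ∀ v : V, ∑ u : V, (if G.Adj v u then f s(v, u) else 0) = 1 := by
  classical
  have hgbij : Function.Bijective g := Finite.injective_iff_bijective.mp hginj
  have hgne : ∀ v, g v ≠ v := fun v hv => G.loopless.irrefl v (by simpa [hv] using hgadj v)
  set c : Sym2 V → ℕ := fun e => (univ.filter (fun w => s(w, g w) = e)).card with hc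
  refine ⟨fun e => (c e : ℝ) / 2, ?_, ?_, ?_⟩
  · intro e he
    have : (univ.filter (fun w => s(w, g w) = e)).Nonempty := by
      rw [Finset.nonempty_iff_ne_empty]
      intro h0
      apply he
      simp [hc, h0]
    obtain ⟨w, hw⟩ := this
    have := (Finset.mem_filter.mp hw).2
    rw [← this]
    exact (hgadj w)
  · intro e
    constructor
    · positivity
    · have : c e ≤ 2 := by
        induction e with
        | h a b =>
          have : univ.filter (fun w => s(w, g w) = s(a, b)) ⊆ {a, b} := by
            intro w hw
            have hw2 := (Finset.mem_filter.mp hw).2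
            rcases Sym2.eq_iff.mp hw2 with ⟨h1, _⟩ | ⟨h1, _⟩
            · simp [h1]
            · simp [h1]
          calc c s(a, b) ≤ ({a, b} : Finset V).card := Finset.card_le_card this
            _ ≤ 2 := Finset.card_insert_le _ _ |>.trans (by simp)
      have h2 : (c e : ℝ) ≤ 2 := by exact_mod_cast this
      linarith
  · intro v
    -- the sum in ℕ
    have key : ∑ u : V, (if G.Adj v u then c s(v, u) else 0) = 2 := by
      have step1 : ∀ u : V, (if G.Adj v u then c s(v, u) else 0)
          = ∑ w : V, (if G.Adj v u ∧ s(w, g w) = s(v, u) then 1 else 0) := by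
        intro u
        rw [hc]
        simp only [Finset.card_filter]
        split
        · next hadj => exact Finset.sum_congr rfl fun w _ => by simp [hadj]
        · next hadj => exact (Finset.sum_eq_zero fun w _ => by simp [hadj]).symm
      rw [Finset.sum_congr rfl fun u _ => step1 u, Finset.sum_comm]
      have step2 : ∀ w : V, (∑ u : V, if G.Adj v u ∧ s(w, g w) = s(v, u) then 1 else 0)
          = if w = v ∨ g w = v then 1 else 0 := by
        intro w
        by_cases hwv : w = v
        · subst hwv
          rw [if_pos (Or.inl rfl)]
          rw [Finset.sum_eq_single (g w)]
          · rw [if_pos ⟨hgadj w, rfl⟩]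
          · intro u _ hu
            rw [if_neg]
            rintro ⟨-, heq⟩
            rcases Sym2.eq_iff.mp heq with ⟨-, h2⟩ | ⟨h1, h2⟩
            · exact hu h2.symm
            · exact hgne w h2
          · intro hmem; exact absurd (Finset.mem_univ _) hmem
        · by_cases hgwv : g w = v
          · rw [if_pos (Or.inr hgwv)]
            rw [Finset.sum_eq_single w]
            · rw [if_pos ⟨by rw [← hgwv]; exact (hgadj w).symm, by rw [hgwv, Sym2.eq_swap]⟩]
            · intro u _ hu
              rw [if_neg]
              rintro ⟨-, heq⟩
              rcases Sym2.eq_iff.mp heq with ⟨h1, -⟩ | ⟨h1, -⟩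
              · exact hwv h1
              · exact hu h1.symm
            · intro hmem; exact absurd (Finset.mem_univ _) hmem
          · rw [if_neg (by tauto)]
            refine Finset.sum_eq_zero fun u _ => ?_
            rw [if_neg]
            rintro ⟨-, heq⟩
            rcases Sym2.eq_iff.mp heq with ⟨h1, -⟩ | ⟨-, h2⟩
            · exact hwv h1
            · exact hgwv h2
      rw [Finset.sum_congr rfl fun w _ => step2 w]
      have hfil : univ.filter (fun w => w = v ∨ g w = v) = {v, hgbij.2 v |>.choose} := by
        ext w
        simp only [Finset.mem_filter, Finset.mem_univ, true_and, Finset.mem_insert,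
          Finset.mem_singleton]
        constructor
        · rintro (h | h)
          · exact Or.inl h
          · exact Or.inr (hginj (h.trans (hgbij.2 v).choose_spec.symm))
        · rintro (h | h)
          · exact Or.inl h
          · exact Or.inr (h ▸ (hgbij.2 v).choose_spec)
      rw [← Finset.sum_filter, hfil]
      have hne : v ≠ (hgbij.2 v).choose := by
        intro h
        apply hgne v
        conv_lhs => rw [h]
        rw [(hgbij.2 v).choose_spec]
      rw [Finset.sum_pair hne]
    -- now convert to ℝ
    have : ∑ u : V, (if G.Adj v u then ((c s(v, u) : ℝ) / 2) else 0)
        = (∑ u : V, (if G.Adj v u then (c s(v, u) : ℕ) else 0) : ℕ) / 2 := by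
      rw [Nat.cast_sum]
      rw [Finset.sum_div]
      refine Finset.sum_congr rfl fun u _ => ?_
      split <;> simp
    rw [this, key]
    norm_num


end Aux

theorem stmt6 {V : Type*} [Fintype V] (G : SimpleGraph V) :
    (∃ f, IsFractionalPerfectMatching G f) ↔
      ∀ S : Finset V, isoCount (G.induce ((↑S : Set V)ᶜ)) ≤ S.card := by
  classical
  constructor
  · rintro ⟨f, hsupp, hb, hdeg⟩ S
    rw [isoCount, isoCount_induce_eq]
    exact forward G f hsupp hb hdeg S
  · intro h
    have h' : ∀ S : Finset V,
        (univ.filter (fun v => v ∉ S ∧ ∀ u, G.Adj v u → u ∈ S)).card ≤ S.card := by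
      intro S
      have := h S
      rwa [isoCount, isoCount_induce_eq] at this
    obtain ⟨g, hginj, hgmem⟩ :=
      (Finset.all_card_le_biUnion_card_iff_exists_injective
        (fun a => univ.filter (G.Adj a))).mp (hall G h')
    have hgadj : ∀ v, G.Adj v (g v) := fun v => (Finset.mem_filter.mp (hgmem v)).2
    obtain ⟨f, h1, h2, h3⟩ := construct G g hginj hgadj
    exact ⟨f, h1, h2, h3⟩


end SpectralKMatching
end

section
/- For integers n ≥ 8 and t ≥ 2 with n even, ρ(K_1 ∨ (K_{n−3} ∪ 2K_1)) > ρ(K_t ∨ (K_{n−2t−1} ∪ (t+1)K_1)). -/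
open Finset

namespace SpectralKMatching

open Polynomial Matrix

lemma eval_charpoly'' {V : Type*} [Fintype V] [DecidableEq V] (M : Matrix V V ℝ) (x : ℝ) :
    M.charpoly.eval x = (x • (1 : Matrix V V ℝ) - M).det := by
  rw [Matrix.charpoly, _root_.eval_det, matPolyEquiv_charmatrix]
  rw [Polynomial.eval_sub, Polynomial.eval_X, Polynomial.eval_C, Matrix.smul_one_eq_diagonal]
  rfl

lemma charpoly_root_iff {V : Type*} [Fintype V] [DecidableEq V] (M : Matrix V V ℝ) (x : ℝ) :
    M.charpoly.IsRoot x ↔ ∃ v : V → ℝ, v ≠ 0 ∧ M.mulVec v = x • v := by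
  rw [Polynomial.IsRoot, eval_charpoly'', ← Matrix.exists_mulVec_eq_zero_iff]
  constructor
  · rintro ⟨v, hv, h⟩
    refine ⟨v, hv, ?_⟩
    rw [Matrix.sub_mulVec, Matrix.smul_mulVec, Matrix.one_mulVec, sub_eq_zero] at h
    rw [← h]
  · rintro ⟨v, hv, h⟩
    refine ⟨v, hv, ?_⟩
    rw [Matrix.sub_mulVec, Matrix.smul_mulVec, Matrix.one_mulVec, h, sub_self]


lemma sum_ite_ne {N : ℕ} (f : Fin N → ℝ) (i : Fin N) :
    ∑ j, (if i ≠ j then f j else 0) = (∑ j, f j) - f i := by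
  have : ∀ j, (if i ≠ j then f j else 0) = f j - (if i = j then f j else 0) := by
    intro j; by_cases h : i = j <;> simp [h]
  rw [Finset.sum_congr rfl fun j _ => this j, Finset.sum_sub_distrib,
    Finset.sum_ite_eq Finset.univ i f, if_pos (Finset.mem_univ i)]

open scoped Classical in
lemma adjMatrix_model₁_apply (t n : ℕ) (u w : Fin t ⊕ (Fin (n - 2*t - 1) ⊕ Fin (t+1))) :
    ((model₁ t n).adjMatrix ℝ) u w = if (model₁ t n).Adj u w then 1 else 0 := by
  simp [SimpleGraph.adjMatrix_apply]

open scoped Classical in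
lemma mulVec_model₁_inl (t n : ℕ) (v : (Fin t ⊕ (Fin (n - 2*t - 1) ⊕ Fin (t+1))) → ℝ)
    (i : Fin t) :
    ((model₁ t n).adjMatrix ℝ).mulVec v (Sum.inl i) =
      ((∑ j, v (Sum.inl j)) - v (Sum.inl i)) + (∑ j, v (Sum.inr (Sum.inl j)))
        + (∑ k, v (Sum.inr (Sum.inr k))) := by
  simp only [Matrix.mulVec, dotProduct, Fintype.sum_sum_type,
    SimpleGraph.adjMatrix_apply]
  have h1 : ∀ j : Fin t, (if (model₁ t n).Adj (Sum.inl i) (Sum.inl j) then (1:ℝ) else 0) * v (Sum.inl j)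
      = (if i ≠ j then v (Sum.inl j) else 0) := by
    intro j
    have : (model₁ t n).Adj (Sum.inl i) (Sum.inl j) ↔ i ≠ j := Iff.rfl
    by_cases h : i = j <;> simp [this, h]
  have h2 : ∀ w : Fin (n - 2*t - 1) ⊕ Fin (t+1),
      (if (model₁ t n).Adj (Sum.inl i) (Sum.inr w) then (1:ℝ) else 0) * v (Sum.inr w)
      = v (Sum.inr w) := by
    intro w
    have : (model₁ t n).Adj (Sum.inl i) (Sum.inr w) := trivial
    simp [this]
  rw [Finset.sum_congr rfl fun j _ => h1 j,
    Finset.sum_congr rfl fun w _ => h2 (Sum.inl w),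
    Finset.sum_congr rfl fun w _ => h2 (Sum.inr w),
    sum_ite_ne (fun j => v (Sum.inl j)) i]
  ring

open scoped Classical in
lemma mulVec_model₁_inrl (t n : ℕ) (v : (Fin t ⊕ (Fin (n - 2*t - 1) ⊕ Fin (t+1))) → ℝ)
    (j : Fin (n - 2*t - 1)) :
    ((model₁ t n).adjMatrix ℝ).mulVec v (Sum.inr (Sum.inl j)) =
      (∑ i, v (Sum.inl i)) + ((∑ j', v (Sum.inr (Sum.inl j'))) - v (Sum.inr (Sum.inl j))) := by
  simp only [Matrix.mulVec, dotProduct, Fintype.sum_sum_type,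
    SimpleGraph.adjMatrix_apply]
  have h1 : ∀ i : Fin t,
      (if (model₁ t n).Adj (Sum.inr (Sum.inl j)) (Sum.inl i) then (1:ℝ) else 0) * v (Sum.inl i)
      = v (Sum.inl i) := by
    intro i
    have : (model₁ t n).Adj (Sum.inr (Sum.inl j)) (Sum.inl i) := by
      simp [model₁, join, SimpleGraph.completeGraph]
    simp [this]
  have h2 : ∀ j' : Fin (n - 2*t - 1),
      (if (model₁ t n).Adj (Sum.inr (Sum.inl j)) (Sum.inr (Sum.inl j')) then (1:ℝ) else 0)
        * v (Sum.inr (Sum.inl j')) = (if j ≠ j' then v (Sum.inr (Sum.inl j')) else 0) := by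
    intro j'
    have h : (model₁ t n).Adj (Sum.inr (Sum.inl j)) (Sum.inr (Sum.inl j')) ↔ j ≠ j' := by
      simp [model₁, join, SimpleGraph.completeGraph]
    by_cases hjj : j = j' <;> simp [h, hjj]
  have h3 : ∀ k : Fin (t+1),
      (if (model₁ t n).Adj (Sum.inr (Sum.inl j)) (Sum.inr (Sum.inr k)) then (1:ℝ) else 0)
        * v (Sum.inr (Sum.inr k)) = 0 := by
    intro k
    have : ¬ (model₁ t n).Adj (Sum.inr (Sum.inl j)) (Sum.inr (Sum.inr k)) := by
      simp [model₁, join, SimpleGraph.completeGraph]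
    simp [this]
  rw [Finset.sum_congr rfl fun i _ => h1 i,
    Finset.sum_congr rfl fun j' _ => h2 j',
    Finset.sum_congr rfl fun k _ => h3 k,
    sum_ite_ne (fun j' => v (Sum.inr (Sum.inl j'))) j]
  simp

open scoped Classical in
lemma mulVec_model₁_inrr (t n : ℕ) (v : (Fin t ⊕ (Fin (n - 2*t - 1) ⊕ Fin (t+1))) → ℝ)
    (k : Fin (t+1)) :
    ((model₁ t n).adjMatrix ℝ).mulVec v (Sum.inr (Sum.inr k)) = ∑ i, v (Sum.inl i) := by
  simp only [Matrix.mulVec, dotProduct, Fintype.sum_sum_type,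
    SimpleGraph.adjMatrix_apply]
  have h1 : ∀ i : Fin t,
      (if (model₁ t n).Adj (Sum.inr (Sum.inr k)) (Sum.inl i) then (1:ℝ) else 0) * v (Sum.inl i)
      = v (Sum.inl i) := by
    intro i
    have : (model₁ t n).Adj (Sum.inr (Sum.inr k)) (Sum.inl i) := by
      simp [model₁, join, SimpleGraph.completeGraph]
    simp [this]
  have h2 : ∀ j : Fin (n - 2*t - 1),
      (if (model₁ t n).Adj (Sum.inr (Sum.inr k)) (Sum.inr (Sum.inl j)) then (1:ℝ) else 0)
        * v (Sum.inr (Sum.inl j)) = 0 := by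
    intro j
    have : ¬ (model₁ t n).Adj (Sum.inr (Sum.inr k)) (Sum.inr (Sum.inl j)) := by
      simp [model₁, join, SimpleGraph.completeGraph]
    simp [this]
  have h3 : ∀ k' : Fin (t+1),
      (if (model₁ t n).Adj (Sum.inr (Sum.inr k)) (Sum.inr (Sum.inr k')) then (1:ℝ) else 0)
        * v (Sum.inr (Sum.inr k')) = 0 := by
    intro k'
    have : ¬ (model₁ t n).Adj (Sum.inr (Sum.inr k)) (Sum.inr (Sum.inr k')) := by
      simp [model₁, join, SimpleGraph.completeGraph]
    simp [this]
  rw [Finset.sum_congr rfl fun i _ => h1 i,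
    Finset.sum_congr rfl fun j _ => h2 j,
    Finset.sum_congr rfl fun k' _ => h3 k']
  simp

lemma cast_m (t n : ℕ) (hnt : 2*t + 1 ≤ n) : ((n - 2*t - 1 : ℕ) : ℝ) = (n:ℝ) - 2*t - 1 := by
  have h : (n - 2*t - 1 : ℕ) = n - (2*t+1) := by omega
  rw [h, Nat.cast_sub (by omega)]
  push_cast
  ring

open scoped Classical in
lemma lift_root (t n : ℕ) (ht : 1 ≤ t) (hnt : 2*t + 2 ≤ n) (x : ℝ) (hx : x ≠ 0)
    (hq : (x + 1 - t) * x * (x + 1 - ((n:ℝ) - 2*t - 1)) - t * ((n:ℝ) - 2*t - 1) * x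
      - t * (t+1) * (x + 1 - ((n:ℝ) - 2*t - 1)) = 0) :
    ((model₁ t n).adjMatrix ℝ).charpoly.IsRoot x := by
  set m : ℝ := (n:ℝ) - 2*t - 1 with hm
  rw [charpoly_root_iff]
  set v : Fin t ⊕ (Fin (n - 2*t - 1) ⊕ Fin (t+1)) → ℝ :=
    Sum.elim (fun _ => x * (x + 1 - m))
      (Sum.elim (fun _ => (t:ℝ) * x) (fun _ => (t:ℝ) * (x + 1 - m))) with hv
  refine ⟨v, ?_, ?_⟩
  · intro h0
    have hmem : 0 < n - 2*t - 1 := by omega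
    have := congrFun h0 (Sum.inr (Sum.inl ⟨0, hmem⟩))
    simp only [hv, Sum.elim_inr, Sum.elim_inl, Pi.zero_apply] at this
    have ht' : (0:ℝ) < t := by exact_mod_cast (by omega : 0 < t)
    exact (mul_ne_zero (ne_of_gt ht') hx) this
  · funext u
    have hSa : (∑ j : Fin t, v (Sum.inl j)) = (t:ℝ) * (x * (x + 1 - m)) := by
      simp [hv, Finset.sum_const, nsmul_eq_mul]
    have hSb : (∑ j : Fin (n - 2*t - 1), v (Sum.inr (Sum.inl j))) = m * ((t:ℝ) * x) := by
      simp only [hv, Sum.elim_inr, Sum.elim_inl, Finset.sum_const, Finset.card_univ,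
        Fintype.card_fin, nsmul_eq_mul]
      rw [cast_m t n (by omega)]
    have hSc : (∑ k : Fin (t+1), v (Sum.inr (Sum.inr k))) = ((t:ℝ)+1) * ((t:ℝ) * (x + 1 - m)) := by
      simp only [hv, Sum.elim_inr, Finset.sum_const, Finset.card_univ,
        Fintype.card_fin, nsmul_eq_mul]
      push_cast
      ring
    rcases u with i | j | k
    · rw [mulVec_model₁_inl, hSa, hSb, hSc]
      simp only [hv, Sum.elim_inl, Pi.smul_apply, smul_eq_mul]
      linear_combination -hq
    · rw [mulVec_model₁_inrl, hSa, hSb]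
      simp only [hv, Sum.elim_inr, Sum.elim_inl, Pi.smul_apply, smul_eq_mul]
      ring
    · rw [mulVec_model₁_inrr, hSa]
      simp only [hv, Sum.elim_inr, Pi.smul_apply, smul_eq_mul]
      ring

lemma qpos_real (e s t : ℝ) (he : 0 < e) (hs : 0 ≤ s) (ht' : (t = 2 ∧ 2 ≤ s) ∨ 3 ≤ t) :
    0 < ((2*t+s-1+e) + 1 - t) * (2*t+s-1+e) * ((2*t+s-1+e) + 1 - (s+1))
      - t * (s+1) * (2*t+s-1+e) - t * (t+1) * ((2*t+s-1+e) + 1 - (s+1)) := by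
  have ht2 : 2 ≤ t := by rcases ht' with ⟨h,_⟩ | h <;> linarith
  have hA : 0 < (7*t^2 - 8*t + 1) + s*(6*t-3) + s^2 + e*(5*t-2+2*s) + e^2 := by
    nlinarith [sq_nonneg s, sq_nonneg e, mul_nonneg hs hs]
  have hB : 0 ≤ (2*t^3 - 7*t^2 + 3*t) + s*(4*t^2-5*t+1) + s^2*(t-1) := by
    rcases ht' with ⟨h2, hs2⟩ | h3
    · subst h2; nlinarith
    · have h1 : 0 ≤ t*(2*t-1)*(t-3) :=
        mul_nonneg (mul_nonneg (by linarith) (by linarith)) (by linarith)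
      have h2 : 0 ≤ s*((4*t-1)*(t-1)) :=
        mul_nonneg hs (mul_nonneg (by linarith) (by linarith))
      have h3' : 0 ≤ s^2*(t-1) := mul_nonneg (sq_nonneg s) (by linarith)
      nlinarith
  nlinarith [mul_pos he hA]

lemma qpos (t n : ℕ) (ht : 2 ≤ t) (hn8 : 8 ≤ n) (hnt : 2*t + 2 ≤ n) (x : ℝ)
    (hx : (n:ℝ) - 3 < x) :
    0 < (x + 1 - t) * x * (x + 1 - ((n:ℝ) - 2*t - 1)) - t * ((n:ℝ) - 2*t - 1) * x
      - t * (t+1) * (x + 1 - ((n:ℝ) - 2*t - 1)) := by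
  have hsr : (0:ℝ) ≤ (n:ℝ) - 2*t - 2 := by
    have : ((2*t+2 : ℕ) : ℝ) ≤ (n:ℝ) := by exact_mod_cast hnt
    push_cast at this; linarith
  have ht2 : (2:ℝ) ≤ (t:ℝ) := by exact_mod_cast ht
  have hcase : ((t:ℝ) = 2 ∧ 2 ≤ (n:ℝ) - 2*t - 2) ∨ 3 ≤ (t:ℝ) := by
    rcases eq_or_lt_of_le ht with h | h
    · left
      constructor
      · exact_mod_cast h.symm
      · have h8 : ((8:ℕ):ℝ) ≤ (n:ℝ) := by exact_mod_cast hn8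
        have : (t:ℝ) = 2 := by exact_mod_cast h.symm
        push_cast at h8
        linarith
    · right; exact_mod_cast h
  have key := qpos_real (x - ((n:ℝ)-3)) ((n:ℝ) - 2*t - 2) (t:ℝ) (by linarith) hsr hcase
  have heq : ((2*(t:ℝ)+((n:ℝ) - 2*t - 2)-1+(x - ((n:ℝ)-3))) + 1 - t) * (2*(t:ℝ)+((n:ℝ) - 2*t - 2)-1+(x - ((n:ℝ)-3))) * ((2*(t:ℝ)+((n:ℝ) - 2*t - 2)-1+(x - ((n:ℝ)-3))) + 1 - (((n:ℝ) - 2*t - 2)+1))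
      - t * (((n:ℝ) - 2*t - 2)+1) * (2*(t:ℝ)+((n:ℝ) - 2*t - 2)-1+(x - ((n:ℝ)-3))) - t * (t+1) * ((2*(t:ℝ)+((n:ℝ) - 2*t - 2)-1+(x - ((n:ℝ)-3))) + 1 - (((n:ℝ) - 2*t - 2)+1))
      = (x + 1 - t) * x * (x + 1 - ((n:ℝ) - 2*t - 1)) - t * ((n:ℝ) - 2*t - 1) * x
      - t * (t+1) * (x + 1 - ((n:ℝ) - 2*t - 1)) := by ring
  rw [heq] at key
  exact key

open scoped Classical in
lemma root_le_card {V : Type*} [Fintype V] [DecidableEq V] (G : SimpleGraph V)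
    [DecidableRel G.Adj] (x : ℝ)
    (h : (G.adjMatrix ℝ).charpoly.IsRoot x) : x ≤ (Fintype.card V : ℝ) := by
  rcases le_or_gt x 0 with hx | hx
  · exact hx.trans (by positivity)
  obtain ⟨v, hv, hEv⟩ := (charpoly_root_iff _ x).mp h
  obtain ⟨u, hu⟩ := Function.ne_iff.mp hv
  simp only [Pi.zero_apply] at hu
  have : Nonempty V := ⟨u⟩
  obtain ⟨i, -, hi⟩ := Finset.exists_max_image Finset.univ (fun i => |v i|)
    ⟨u, Finset.mem_univ u⟩
  have hvi : 0 < |v i| := lt_of_lt_of_le (abs_pos.mpr hu) (hi u (Finset.mem_univ u))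
  have hxv : x * |v i| ≤ (Fintype.card V : ℝ) * |v i| := by
    have h1 : x * v i = ∑ j, G.adjMatrix ℝ i j * v j := by
      have := congrFun hEv i
      simp only [Pi.smul_apply, smul_eq_mul] at this
      rw [← this]
      rfl
    calc x * |v i| = |x * v i| := by
          rw [abs_mul, abs_of_pos hx]
      _ = |∑ j, G.adjMatrix ℝ i j * v j| := by rw [h1]
      _ ≤ ∑ j, |G.adjMatrix ℝ i j * v j| := Finset.abs_sum_le_sum_abs _ _
      _ ≤ ∑ _j : V, |v i| := by
          apply Finset.sum_le_sum
          intro j _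
          rw [abs_mul]
          by_cases hadj : G.Adj i j
          · simp only [SimpleGraph.adjMatrix_apply, if_pos hadj, abs_one, one_mul]
            exact hi j (Finset.mem_univ j)
          · simp only [SimpleGraph.adjMatrix_apply, if_neg hadj, abs_zero, zero_mul]
            exact abs_nonneg _
      _ = (Fintype.card V : ℝ) * |v i| := by
          rw [Finset.sum_const, Finset.card_univ, nsmul_eq_mul]
  exact le_of_mul_le_mul_right hxv hvi |>.trans_eq rfl

open scoped Classical in
lemma root_le_model₁ (t n : ℕ) (ht : 2 ≤ t) (hn8 : 8 ≤ n) (hnt : 2*t + 2 ≤ n) (x : ℝ)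
    (hroot : ((model₁ t n).adjMatrix ℝ).charpoly.IsRoot x) : x ≤ (n:ℝ) - 3 := by
  by_contra hgt
  push_neg at hgt
  have hn8' : (8:ℝ) ≤ (n:ℝ) := by exact_mod_cast hn8
  have ht2 : (2:ℝ) ≤ (t:ℝ) := by exact_mod_cast ht
  have hnt' : 2*(t:ℝ) + 2 ≤ (n:ℝ) := by exact_mod_cast hnt
  have hx0 : (0:ℝ) < x := by linarith
  have hx1 : (0:ℝ) < x + 1 := by linarith
  obtain ⟨v, hv, hEv⟩ := (charpoly_root_iff _ x).mp hroot
  set m : ℝ := (n:ℝ) - 2*t - 1 with hm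
  set Sa : ℝ := ∑ i, v (Sum.inl i) with hSa
  set Sb : ℝ := ∑ j, v (Sum.inr (Sum.inl j)) with hSb
  set Sc : ℝ := ∑ k, v (Sum.inr (Sum.inr k)) with hSc
  have e1 : ∀ i, (x+1) * v (Sum.inl i) = Sa + Sb + Sc := by
    intro i
    have h := congrFun hEv (Sum.inl i)
    rw [mulVec_model₁_inl] at h
    simp only [Pi.smul_apply, smul_eq_mul] at h
    rw [← hSa, ← hSb, ← hSc] at h
    linarith
  have e2 : ∀ j, (x+1) * v (Sum.inr (Sum.inl j)) = Sa + Sb := by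
    intro j
    have h := congrFun hEv (Sum.inr (Sum.inl j))
    rw [mulVec_model₁_inrl] at h
    simp only [Pi.smul_apply, smul_eq_mul] at h
    rw [← hSa, ← hSb] at h
    linarith
  have e3 : ∀ k, x * v (Sum.inr (Sum.inr k)) = Sa := by
    intro k
    have h := congrFun hEv (Sum.inr (Sum.inr k))
    rw [mulVec_model₁_inrr] at h
    simp only [Pi.smul_apply, smul_eq_mul] at h
    rw [← hSa] at h
    linarith
  have E1 : (x+1) * Sa = (t:ℝ) * (Sa + Sb + Sc) := by
    have : ∑ i : Fin t, ((x+1) * v (Sum.inl i)) = ∑ _i : Fin t, (Sa + Sb + Sc) :=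
      Finset.sum_congr rfl fun i _ => e1 i
    rw [← Finset.mul_sum, ← hSa, Finset.sum_const, Finset.card_univ, Fintype.card_fin,
      nsmul_eq_mul] at this
    exact this
  have E2 : (x+1) * Sb = m * (Sa + Sb) := by
    have : ∑ j : Fin (n - 2*t - 1), ((x+1) * v (Sum.inr (Sum.inl j)))
        = ∑ _j : Fin (n - 2*t - 1), (Sa + Sb) :=
      Finset.sum_congr rfl fun j _ => e2 j
    rw [← Finset.mul_sum, ← hSb, Finset.sum_const, Finset.card_univ, Fintype.card_fin,
      nsmul_eq_mul, cast_m t n (by omega)] at this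
    exact this
  have E3 : x * Sc = ((t:ℝ)+1) * Sa := by
    have : ∑ k : Fin (t+1), (x * v (Sum.inr (Sum.inr k))) = ∑ _k : Fin (t+1), Sa :=
      Finset.sum_congr rfl fun k _ => e3 k
    rw [← Finset.mul_sum, ← hSc, Finset.sum_const, Finset.card_univ, Fintype.card_fin,
      nsmul_eq_mul] at this
    rw [this]
    push_cast
    ring
  have hQ : ((x + 1 - t) * x * (x + 1 - m) - t * m * x - t * (t+1) * (x + 1 - m)) * Sa = 0 := by
    linear_combination (x*(x+1-m)) * E1 + ((t:ℝ)*x) * E2 + ((t:ℝ)*(x+1-m)) * E3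
  have hQpos := qpos t n ht hn8 hnt x hgt
  rw [← hm] at hQpos
  have hSa0 : Sa = 0 := by
    rcases mul_eq_zero.mp hQ with h | h
    · linarith
    · exact h
  have hSc0 : Sc = 0 := by
    have := E3
    rw [hSa0, mul_zero] at this
    exact (mul_eq_zero.mp this).resolve_left (ne_of_gt hx0)
  have hSb0 : Sb = 0 := by
    have hxm : 0 < x + 1 - m := by rw [hm]; linarith
    have : (x + 1 - m) * Sb = m * Sa := by linarith [E2]
    rw [hSa0, mul_zero] at this
    exact (mul_eq_zero.mp this).resolve_left (ne_of_gt hxm)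
  obtain ⟨u, hu⟩ := Function.ne_iff.mp hv
  simp only [Pi.zero_apply] at hu
  rcases u with i | j | k
  · have h := e1 i
    rw [hSa0, hSb0, hSc0] at h
    have h' : (x+1) * v (Sum.inl i) = 0 := by linarith
    exact hu ((mul_eq_zero.mp h').resolve_left (ne_of_gt hx1))
  · have h := e2 j
    rw [hSa0, hSb0] at h
    have h' : (x+1) * v (Sum.inr (Sum.inl j)) = 0 := by linarith
    exact hu ((mul_eq_zero.mp h').resolve_left (ne_of_gt hx1))
  · have h := e3 k
    rw [hSa0] at h
    have h' : x * v (Sum.inr (Sum.inr k)) = 0 := by linarith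
    exact hu ((mul_eq_zero.mp h').resolve_left (ne_of_gt hx0))


theorem stmt8 (n t : ℕ) (hn8 : 8 ≤ n) (ht : 2 ≤ t) (hne : Even n) (hnt : 2*t + 2 ≤ n) :
    specRad (model₁ t n) < specRad (model₁ 1 n) := by
  classical
  have hn8' : (8:ℝ) ≤ (n:ℝ) := by exact_mod_cast hn8
  set f : ℝ → ℝ := fun x => (x + 1 - ((1:ℕ):ℝ)) * x * (x + 1 - ((n:ℝ) - 2*((1:ℕ):ℝ) - 1))
    - ((1:ℕ):ℝ) * ((n:ℝ) - 2*((1:ℕ):ℝ) - 1) * x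
    - ((1:ℕ):ℝ) * (((1:ℕ):ℝ)+1) * (x + 1 - ((n:ℝ) - 2*((1:ℕ):ℝ) - 1)) with hf
  have hcont : ContinuousOn f (Set.Icc ((n:ℝ)-3) ((n:ℝ)-2)) := by
    apply Continuous.continuousOn
    rw [hf]
    push_cast
    fun_prop
  have hfa : f ((n:ℝ)-3) = -2 := by rw [hf]; push_cast; ring
  have hfb : 0 < f ((n:ℝ)-2) := by
    rw [hf]; push_cast; nlinarith
  have hmem : (0:ℝ) ∈ Set.Ioo (f ((n:ℝ)-3)) (f ((n:ℝ)-2)) := by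
    rw [hfa]; exact ⟨by norm_num, hfb⟩
  obtain ⟨x₀, hx₀mem, hx₀⟩ := intermediate_value_Ioo (by linarith : (n:ℝ)-3 ≤ (n:ℝ)-2)
    hcont hmem
  obtain ⟨hx₀l, hx₀r⟩ := hx₀mem
  have hx₀pos : (0:ℝ) < x₀ := by linarith
  have hroot1 : ((model₁ 1 n).adjMatrix ℝ).charpoly.IsRoot x₀ := by
    apply lift_root 1 n le_rfl (by omega) x₀ (ne_of_gt hx₀pos)
    rw [hf] at hx₀
    exact hx₀
  have hb1 : BddAbove {x : ℝ | ((model₁ 1 n).adjMatrix ℝ).charpoly.IsRoot x} := by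
    refine ⟨(Fintype.card (Fin 1 ⊕ (Fin (n - 2*1 - 1) ⊕ Fin (1+1))) : ℝ), ?_⟩
    intro y hy
    exact root_le_card _ y hy
  have h1 : x₀ ≤ specRad (model₁ 1 n) := le_csSup hb1 hroot1
  have h2 : specRad (model₁ t n) ≤ (n:ℝ) - 3 := by
    rcases Set.eq_empty_or_nonempty
        {x : ℝ | ((model₁ t n).adjMatrix ℝ).charpoly.IsRoot x} with he | hne'
    · rw [specRad, he, Real.sSup_empty]
      linarith
    · exact csSup_le hne' fun y hy => root_le_model₁ t n ht hn8 hnt y hy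
  linarith


end SpectralKMatching
end

section
/- Let B_3 = [[s−1,3,s,n−2s−3],[s,2,0,0],[s,0,0,0],[s,0,0,n−2s−4]] and let B_* be the matrix obtained by replacing s with t. Then det(xI−B_3) − det(xI−B_*) = (s−t)·ψ(x), where ψ(x) = x³ − (s+t+4)x² + (sn+tn+3n−2s²−(2t+8)s−2t²−8t−14)x + 4s² + (4t+8−2n)s − 2tn + 4t² + 8t. -/
open Finset

namespace SpectralKMatching

lemma detFour (A : Matrix (Fin 4) (Fin 4) ℝ) :
    A.det = A 0 0 * (A 1 1 * (A 2 2 * A 3 3 - A 2 3 * A 3 2)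
        - A 1 2 * (A 2 1 * A 3 3 - A 2 3 * A 3 1)
        + A 1 3 * (A 2 1 * A 3 2 - A 2 2 * A 3 1))
      - A 0 1 * (A 1 0 * (A 2 2 * A 3 3 - A 2 3 * A 3 2)
        - A 1 2 * (A 2 0 * A 3 3 - A 2 3 * A 3 0)
        + A 1 3 * (A 2 0 * A 3 2 - A 2 2 * A 3 0))
      + A 0 2 * (A 1 0 * (A 2 1 * A 3 3 - A 2 3 * A 3 1)
        - A 1 1 * (A 2 0 * A 3 3 - A 2 3 * A 3 0)
        + A 1 3 * (A 2 0 * A 3 1 - A 2 1 * A 3 0))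
      - A 0 3 * (A 1 0 * (A 2 1 * A 3 2 - A 2 2 * A 3 1)
        - A 1 1 * (A 2 0 * A 3 2 - A 2 2 * A 3 0)
        + A 1 2 * (A 2 0 * A 3 1 - A 2 1 * A 3 0)) := by
  have h3 : (Fin.succ 2 : Fin 4) = 3 := by decide
  have hc : ((2 : Fin 3).castSucc : Fin 4) = 2 := by decide
  simp [Matrix.det_succ_row_zero, Fin.sum_univ_succ, Matrix.det_fin_three, Fin.succAbove,
    h3, hc]
  ring

set_option maxHeartbeats 1600000 in
theorem stmt15 (s t n : ℝ) (x : ℝ) :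
    Matrix.det (x • (1 : Matrix (Fin 4) (Fin 4) ℝ) -
        !![s - 1, 3, s, n - 2*s - 3; s, 2, 0, 0; s, 0, 0, 0; s, 0, 0, n - 2*s - 4]) -
      Matrix.det (x • (1 : Matrix (Fin 4) (Fin 4) ℝ) -
        !![t - 1, 3, t, n - 2*t - 3; t, 2, 0, 0; t, 0, 0, 0; t, 0, 0, n - 2*t - 4]) =
    (s - t) * (x^3 - (s + t + 4)*x^2
      + (s*n + t*n + 3*n - 2*s^2 - (2*t + 8)*s - 2*t^2 - 8*t - 14)*x
      + 4*s^2 + (4*t + 8 - 2*n)*s - 2*t*n + 4*t^2 + 8*t) := by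
  have h1 : x • (1 : Matrix (Fin 4) (Fin 4) ℝ) -
      !![s - 1, 3, s, n - 2*s - 3; s, 2, 0, 0; s, 0, 0, 0; s, 0, 0, n - 2*s - 4] =
      !![x-(s-1), -3, -s, -(n-2*s-3); -s, x-2, 0, 0; -s, 0, x, 0; -s, 0, 0, x-(n-2*s-4)] := by
    ext i j
    fin_cases i <;> fin_cases j <;> simp [Matrix.one_apply, Matrix.vecHead, Matrix.vecTail]
  have h2 : x • (1 : Matrix (Fin 4) (Fin 4) ℝ) -
      !![t - 1, 3, t, n - 2*t - 3; t, 2, 0, 0; t, 0, 0, 0; t, 0, 0, n - 2*t - 4] =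
      !![x-(t-1), -3, -t, -(n-2*t-3); -t, x-2, 0, 0; -t, 0, x, 0; -t, 0, 0, x-(n-2*t-4)] := by
    ext i j
    fin_cases i <;> fin_cases j <;> simp [Matrix.one_apply, Matrix.vecHead, Matrix.vecTail]
  rw [h1, h2, detFour, detFour]
  simp [Matrix.vecHead, Matrix.vecTail]
  ring

end SpectralKMatching
end
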